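/- arXiv:1706.03131 — 2 statements merged into one kernel-verified Lean document; each statement's English description precedes it below -/
import Mathlib

section
/- (Lemma 2.4) Suppose ε_H ∈ (0,1), ⟨v, ∇²f(x) v⟩ ≥ -ε_H ‖v‖² for all v ∈ ℝⁿ, ‖∇f(x)‖ ≤ U_g with U_g > 0, ∇f(x) ≠ 0, and let d solve (∇²f(x) + 2ε_H I) d = -∇f(x) (the regularized Newton direction). Then the smallest nonnegative integer j_k such that f(x + θ^{j_k} d) < f(x) - (η/6) θ^{3 j_k} ‖d‖³ exists and satisfies j_k ≤ [log_θ( (6/(L_H+η)) · ε_H²/U_g )]_+ + 1, and moreover f(x) - f(x + θ^{j_k} d) ≥ (η/6)·min{(1/(1+√(1+L_H/2)))³, (6θ/(L_H+η))³} · min{‖∇f(x + θ^{j_k} d)‖³ ε_H^{-3}, ε_H³}. -/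
/-!
The Lipschitz Hessian gives the cubic upper model
`f(x + v) ≤ f(x) + ⟨∇f(x), v⟩ + ⟨v, ∇²f(x) v⟩/2 + L_H‖v‖³/6`. Along the regularized Newton
direction, `⟨d, ∇²f(x) d⟩ = -⟨d, ∇f(x)⟩ - 2ε_H‖d‖²` and `-⟨d, ∇f(x)⟩ ≥ ε_H‖d‖²`, so every step
`t ≤ 1` with `(L_H + η) t‖d‖ < 6ε_H` passes the line search; as `‖d‖ ≤ U_g/ε_H`, this happens once
`θ^j < 6ε_H²/((L_H + η) U_g)`, which bounds `j_k`. For the decrease: if `j_k = 0`, the gradient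
Taylor bound `‖∇f(x + d)‖ ≤ 2ε_H‖d‖ + L_H‖d‖²/2` shows that `‖d‖` is large compared with the new
gradient; if `j_k ≥ 1`, the rejected step `θ^(j_k - 1)` had `θ^(j_k - 1)‖d‖ ≥ 6ε_H/(L_H + η)`.
-/

open scoped RealInnerProductSpace
open Set

section Taylor

variable {E F : Type*} [NormedAddCommGroup E] [NormedSpace ℝ E]
  [NormedAddCommGroup F] [NormedSpace ℝ F]

theorem norm_image_one_le_of_norm_deriv_le_mul_pow {φ φ' : ℝ → F} {C : ℝ} (k : ℕ)
    (hφ : ∀ t, HasDerivAt φ (φ' t) t) (h0 : φ 0 = 0)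
    (bound : ∀ t ∈ Ico (0 : ℝ) 1, ‖φ' t‖ ≤ C * t ^ k) :
    ‖φ 1‖ ≤ C / (k + 1) := by
  have hB : ∀ t : ℝ, HasDerivAt (fun s => C / (k + 1) * s ^ (k + 1)) (C * t ^ k) t := by
    intro t
    refine ((hasDerivAt_pow (k + 1) t).const_mul (C / (k + 1))).congr_deriv ?_
    push_cast
    field_simp
  simpa using image_norm_le_of_norm_deriv_right_le_deriv_boundary
    (fun t _ => (hφ t).continuousAt.continuousWithinAt) (fun t _ => (hφ t).hasDerivWithinAt)
    (by simp [h0]) hB bound (right_mem_Icc.2 zero_le_one)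

theorem hasDerivAt_comp_add_smul {f : E → F} {f' : E → E →L[ℝ] F}
    (hf : ∀ x, HasFDerivAt f (f' x) x) (x v : E) (t : ℝ) :
    HasDerivAt (fun s : ℝ => f (x + s • v)) (f' (x + t • v) v) t := by
  have hline : HasDerivAt (fun s : ℝ => x + s • v) v t := by
    simpa using ((hasDerivAt_id t).smul_const v).const_add x
  exact (hf (x + t • v)).comp_hasDerivAt t hline

theorem norm_image_add_sub_sub_fderiv_le {g : E → F} {g' : E → E →L[ℝ] F} {L : ℝ}
    (hg : ∀ x, HasFDerivAt g (g' x) x) (hlip : ∀ x y, ‖g' x - g' y‖ ≤ L * ‖x - y‖) (x v : E) :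
    ‖g (x + v) - g x - g' x v‖ ≤ L / 2 * ‖v‖ ^ 2 := by
  have hφ : ∀ t : ℝ, HasDerivAt (fun s : ℝ => g (x + s • v) - g x - s • g' x v)
      (g' (x + t • v) v - g' x v) t := fun t =>
    (((hasDerivAt_comp_add_smul hg x v t).sub_const (g x)).sub
      ((hasDerivAt_id' t).smul_const (g' x v))).congr_deriv (by rw [one_smul])
  have bound : ∀ t ∈ Ico (0 : ℝ) 1, ‖g' (x + t • v) v - g' x v‖ ≤ L * ‖v‖ ^ 2 * t ^ 1 := by
    intro t ht
    calc ‖g' (x + t • v) v - g' x v‖ = ‖(g' (x + t • v) - g' x) v‖ := rfl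
      _ ≤ ‖g' (x + t • v) - g' x‖ * ‖v‖ := (g' (x + t • v) - g' x).le_opNorm v
      _ ≤ L * ‖x + t • v - x‖ * ‖v‖ := by gcongr; exact hlip _ _
      _ = L * ‖v‖ ^ 2 * t ^ 1 := by
        rw [add_sub_cancel_left, norm_smul, Real.norm_of_nonneg ht.1]; ring
  have := norm_image_one_le_of_norm_deriv_le_mul_pow 1 hφ (by simp) bound
  norm_num at this
  linarith

end Taylor

section Cubic

variable {E : Type*} [NormedAddCommGroup E] [InnerProductSpace ℝ E] [CompleteSpace E]
  {f : E → ℝ} {gradf : E → E} {hessf : E → E →L[ℝ] E} {L : ℝ}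

theorem abs_image_add_sub_quadratic_le (hgrad : ∀ x, HasGradientAt f (gradf x) x)
    (hhess : ∀ x, HasFDerivAt gradf (hessf x) x)
    (hlip : ∀ x y, ‖hessf x - hessf y‖ ≤ L * ‖x - y‖) (x v : E) :
    |f (x + v) - f x - ⟪gradf x, v⟫ - 1 / 2 * ⟪v, hessf x v⟫| ≤ L / 6 * ‖v‖ ^ 3 := by
  have hψ : ∀ t : ℝ, HasDerivAt
      (fun s : ℝ => f (x + s • v) - f x - s * ⟪gradf x, v⟫ - s ^ 2 / 2 * ⟪v, hessf x v⟫)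
      (⟪gradf (x + t • v) - gradf x - hessf x (t • v), v⟫) t := by
    intro t
    have hf := hasDerivAt_comp_add_smul (fun y => (hgrad y).hasFDerivAt) x v t
    refine (((hf.sub_const (f x)).sub ((hasDerivAt_id' t).mul_const _)).sub
      (((hasDerivAt_pow 2 t).div_const 2).mul_const _)).congr_deriv ?_
    simp only [InnerProductSpace.toDual_apply_apply, inner_sub_left, map_smul,
      real_inner_smul_left, real_inner_comm v (hessf x v)]
    ring
  have bound : ∀ t ∈ Ico (0 : ℝ) 1,
      ‖⟪gradf (x + t • v) - gradf x - hessf x (t • v), v⟫‖ ≤ L / 2 * ‖v‖ ^ 3 * t ^ 2 := by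
    intro t ht
    calc ‖⟪gradf (x + t • v) - gradf x - hessf x (t • v), v⟫‖
        ≤ ‖gradf (x + t • v) - gradf x - hessf x (t • v)‖ * ‖v‖ := norm_inner_le_norm _ _
      _ ≤ L / 2 * ‖t • v‖ ^ 2 * ‖v‖ := by
        gcongr; exact norm_image_add_sub_sub_fderiv_le hhess hlip x (t • v)
      _ = L / 2 * ‖v‖ ^ 3 * t ^ 2 := by
        rw [norm_smul, Real.norm_of_nonneg ht.1]; ring
  have := norm_image_one_le_of_norm_deriv_le_mul_pow 2 hψ (by simp) bound
  norm_num at this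
  linarith

end Cubic

section RegularizedNewton

variable {E : Type*} [NormedAddCommGroup E] [InnerProductSpace ℝ E]
  {H : E →L[ℝ] E} {g d : E} {ε : ℝ}

theorem inner_hess_regularizedNewton (hd : H d + (2 * ε) • d = -g) :
    ⟪d, H d⟫ = -⟪d, g⟫ - 2 * ε * ‖d‖ ^ 2 := by
  have h := congrArg (fun w => ⟪d, w⟫) hd
  simp only [inner_add_right, real_inner_smul_right, inner_neg_right,
    real_inner_self_eq_norm_sq] at h
  linarith

theorem mul_norm_sq_le_neg_inner_regularizedNewton (hH : ∀ v, -ε * ‖v‖ ^ 2 ≤ ⟪v, H v⟫)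
    (hd : H d + (2 * ε) • d = -g) : ε * ‖d‖ ^ 2 ≤ -⟪d, g⟫ := by
  linarith [hH d, inner_hess_regularizedNewton hd]

theorem mul_norm_le_norm_of_regularizedNewton (hH : ∀ v, -ε * ‖v‖ ^ 2 ≤ ⟪v, H v⟫)
    (hd : H d + (2 * ε) • d = -g) : ε * ‖d‖ ≤ ‖g‖ := by
  rcases (norm_nonneg d).eq_or_lt with h0 | hpos
  · simp [← h0]
  · refine le_of_mul_le_mul_left ?_ hpos
    have := mul_norm_sq_le_neg_inner_regularizedNewton hH hd
    nlinarith [neg_le_of_abs_le (abs_real_inner_le_norm d g)]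

theorem regularizedNewton_step_accepted {f : E → ℝ} {x : E} {L η t : ℝ}
    (hmodel : ∀ v, f (x + v) ≤ f x + ⟪g, v⟫ + 1 / 2 * ⟪v, H v⟫ + L / 6 * ‖v‖ ^ 3)
    (hH : ∀ v, -ε * ‖v‖ ^ 2 ≤ ⟪v, H v⟫) (hd : H d + (2 * ε) • d = -g) (hε : 0 ≤ ε)
    (hd0 : d ≠ 0) (ht0 : 0 < t) (ht1 : t ≤ 1) (hsmall : (L + η) * (t * ‖d‖) < 6 * ε) :
    f (x + t • d) < f x - η / 6 * t ^ 3 * ‖d‖ ^ 3 := by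
  have hdescent := mul_norm_sq_le_neg_inner_regularizedNewton hH hd
  have hmodel_t : f (x + t • d) ≤ f x + t * ⟪d, g⟫ + t ^ 2 / 2 * ⟪d, H d⟫
      + L / 6 * t ^ 3 * ‖d‖ ^ 3 := by
    have := hmodel (t • d)
    rwa [map_smul, real_inner_smul_left, real_inner_smul_right, real_inner_smul_right,
      real_inner_comm, norm_smul, Real.norm_of_nonneg ht0.le, mul_pow,
      ← mul_assoc (1 / 2), ← mul_assoc (1 / 2 * t), ← mul_assoc (L / 6),
      show 1 / 2 * t * t = t ^ 2 / 2 by ring] at this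
  rw [inner_hess_regularizedNewton hd] at hmodel_t
  -- The model decreases by at least `ε t² ‖d‖²`, which beats the cubic terms for small `t ‖d‖`.
  have hquad : 0 ≤ (t - t ^ 2 / 2) * (-⟪d, g⟫ - ε * ‖d‖ ^ 2) :=
    mul_nonneg (by nlinarith) (by linarith)
  have hcubic : (L + η) * (t * ‖d‖) * (t ^ 2 * ‖d‖ ^ 2) < 6 * ε * (t ^ 2 * ‖d‖ ^ 2) :=
    mul_lt_mul_of_pos_right hsmall (by positivity)
  have hreg : 0 ≤ (t - t ^ 2 / 2) * (ε * ‖d‖ ^ 2) := mul_nonneg (by nlinarith) (by positivity)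
  nlinarith

theorem norm_image_add_regularizedNewton_le {gradf : E → E} {hessf : E → E →L[ℝ] E} {L : ℝ}
    (hhess : ∀ x, HasFDerivAt gradf (hessf x) x)
    (hlip : ∀ x y, ‖hessf x - hessf y‖ ≤ L * ‖x - y‖) {x : E}
    (hd : hessf x d + (2 * ε) • d = -gradf x) (hε : 0 ≤ ε) :
    ‖gradf (x + d)‖ ≤ 2 * ε * ‖d‖ + L / 2 * ‖d‖ ^ 2 := by
  have hsplit : gradf (x + d) = (gradf (x + d) - gradf x - hessf x d) - (2 * ε) • d := by
    rw [show gradf x = -(hessf x d + (2 * ε) • d) by rw [hd, neg_neg]]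
    abel
  calc ‖gradf (x + d)‖ ≤ ‖gradf (x + d) - gradf x - hessf x d‖ + ‖(2 * ε) • d‖ := by
        conv_lhs => rw [hsplit]
        exact norm_sub_le _ _
    _ ≤ L / 2 * ‖d‖ ^ 2 + 2 * ε * ‖d‖ := by
        rw [norm_smul, Real.norm_of_nonneg (by positivity)]
        gcongr
        exact norm_image_add_sub_sub_fderiv_le hhess hlip x d
    _ = 2 * ε * ‖d‖ + L / 2 * ‖d‖ ^ 2 := add_comm _ _

end RegularizedNewton

theorem one_div_one_add_sqrt_mul_min_le {ε L r w : ℝ} (hε : 0 < ε) (hL : 0 ≤ L) (hr : 0 ≤ r)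
    (hw : w ≤ 2 * ε * r + L / 2 * r ^ 2) :
    1 / (1 + √(1 + L / 2)) * min (w / ε) ε ≤ r := by
  set s := √(1 + L / 2)
  have hs2 : s ^ 2 = 1 + L / 2 := Real.sq_sqrt (by linarith)
  have hs1 : 1 ≤ s := Real.one_le_sqrt.mpr (by linarith)
  rw [div_mul_eq_mul_div, one_mul, div_le_iff₀ (by positivity)]
  rcases le_or_gt ε (r * (1 + s)) with hbig | hsmall
  · exact (min_le_right _ _).trans hbig
  · refine (min_le_left _ _).trans ((div_le_iff₀ hε).mpr ?_)
    -- `L / 2 = (s - 1) (s + 1)`, and `r (1 + s) < ε` turns one factor `r` into `ε`.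
    nlinarith [mul_le_mul_of_nonneg_left hsmall.le (mul_nonneg (sub_nonneg.2 hs1) hr)]

theorem min_pow_three_mul_min_le {a b w ε r : ℝ} (h : min a b * min (w / ε) ε ≤ r) :
    min (a ^ 3) (b ^ 3) * min (w ^ 3 / ε ^ 3) (ε ^ 3) ≤ r ^ 3 := by
  have hmono : Monotone fun t : ℝ => t ^ 3 := (Odd.strictMono_pow (by decide)).monotone
  rw [← div_pow, ← hmono.map_min, ← hmono.map_min, ← mul_pow]
  exact hmono h

theorem mul_lt_of_lt_mul_sq_div {q r c ε U : ℝ} (hε : 0 < ε) (hU : 0 < U) (hq0 : 0 ≤ q)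
    (hq : q < c * ε ^ 2 / U) (hr : ε * r ≤ U) : q * r < c * ε :=
  calc q * r ≤ q * (U / ε) := mul_le_mul_of_nonneg_left ((le_div_iff₀' hε).mpr hr) hq0
    _ < c * ε ^ 2 / U * (U / ε) := by gcongr
    _ = c * ε := by field_simp

theorem exists_first_le_max_logb_add_one {P : ℕ → Prop} {θ A : ℝ} (hθ0 : 0 < θ) (hθ1 : θ < 1)
    (hA : 0 < A) (hP : ∀ j : ℕ, θ ^ j < A → P j) :
    ∃ k, P k ∧ (∀ j < k, ¬ P j) ∧ (k : ℝ) ≤ max (Real.logb θ A) 0 + 1 := by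
  classical
  set B := max (Real.logb θ A) 0
  have hpow : θ ^ (⌊B⌋₊ + 1) < A :=
    calc θ ^ (⌊B⌋₊ + 1) = θ ^ (((⌊B⌋₊ + 1 : ℕ) : ℝ)) := (Real.rpow_natCast θ _).symm
      _ < θ ^ Real.logb θ A := by
        refine Real.rpow_lt_rpow_of_exponent_gt hθ0 hθ1 ?_
        push_cast
        exact (le_max_left _ _).trans_lt (Nat.lt_floor_add_one B)
      _ = A := Real.rpow_logb hθ0 hθ1.ne hA
  have hex : ∃ j, P j := ⟨_, hP _ hpow⟩
  refine ⟨Nat.find hex, Nat.find_spec hex, fun j => Nat.find_min hex, ?_⟩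
  calc (Nat.find hex : ℝ) ≤ ((⌊B⌋₊ + 1 : ℕ) : ℝ) := Nat.cast_le.mpr (Nat.find_le (hP _ hpow))
    _ ≤ B + 1 := by push_cast; linarith [Nat.floor_le (le_max_right (Real.logb θ A) 0)]

theorem regularized_newton_step_linesearch_general
    {n : ℕ} (f : EuclideanSpace ℝ (Fin n) → ℝ)
    (gradf : EuclideanSpace ℝ (Fin n) → EuclideanSpace ℝ (Fin n))
    (hessf : EuclideanSpace ℝ (Fin n) → EuclideanSpace ℝ (Fin n) →L[ℝ] EuclideanSpace ℝ (Fin n))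
    (hgrad : ∀ x, HasGradientAt f (gradf x) x)
    (hhess : ∀ x, HasFDerivAt gradf (hessf x) x)
    (L_H : ℝ) (hLH : 0 < L_H)
    (hlip : ∀ x y, ‖hessf x - hessf y‖ ≤ L_H * ‖x - y‖)
    (θ η ε_H U_g : ℝ) (hθ : θ ∈ Set.Ioo (0:ℝ) 1) (hη : 0 < η)
    (hεH : ε_H ∈ Set.Ioo (0:ℝ) 1)
    (x d : EuclideanSpace ℝ (Fin n))
    (hpsd : ∀ v : EuclideanSpace ℝ (Fin n), -ε_H * ‖v‖^2 ≤ ⟪v, hessf x v⟫)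
    (hgb : ‖gradf x‖ ≤ U_g) (hgne : gradf x ≠ 0)
    (hregnewton : hessf x d + (2*ε_H) • d = -gradf x) :
    ∃ jk : ℕ,
      (f (x + θ^jk • d) < f x - η/6 * θ^(3*jk) * ‖d‖^3) ∧
      (∀ j : ℕ, j < jk → ¬ (f (x + θ^j • d) < f x - η/6 * θ^(3*j) * ‖d‖^3)) ∧
      (jk : ℝ) ≤ max (Real.logb θ (6/(L_H+η) * ε_H^2 / U_g)) 0 + 1 ∧
      f x - f (x + θ^jk • d) ≥
        η/6 * min ((1/(1+Real.sqrt (1+L_H/2)))^3) ((6*θ/(L_H+η))^3) *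
          min (‖gradf (x + θ^jk • d)‖^3 / ε_H^3) (ε_H^3) := by
  obtain ⟨hθ0, hθ1⟩ := hθ
  obtain ⟨hε, -⟩ := hεH
  have hLη : 0 < L_H + η := by linarith
  have hd0 : d ≠ 0 := by
    rintro rfl
    exact hgne (by simpa using hregnewton.symm)
  have hUg : 0 < U_g := (norm_pos_iff.mpr hgne).trans_le hgb
  have hdU : ε_H * ‖d‖ ≤ U_g := (mul_norm_le_norm_of_regularizedNewton hpsd hregnewton).trans hgb
  have hacc (j : ℕ) (hj : θ ^ j * ‖d‖ < 6 / (L_H + η) * ε_H) :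
      f (x + θ ^ j • d) < f x - η / 6 * θ ^ (3 * j) * ‖d‖ ^ 3 := by
    rw [pow_mul']
    refine regularizedNewton_step_accepted (L := L_H)
      (fun v => by linarith [(abs_le.mp (abs_image_add_sub_quadratic_le hgrad hhess hlip x v)).2])
      hpsd hregnewton hε.le hd0 (pow_pos hθ0 j) (pow_le_one₀ hθ0.le hθ1.le) ?_
    rw [div_mul_eq_mul_div, lt_div_iff₀ hLη] at hj
    linarith
  have hpow (j : ℕ) (hj : θ ^ j < 6 / (L_H + η) * ε_H ^ 2 / U_g) :=
    hacc j (mul_lt_of_lt_mul_sq_div hε hUg (pow_nonneg hθ0.le j) hj hdU)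
  obtain ⟨k, hk, hmin, hkle⟩ := exists_first_le_max_logb_add_one hθ0 hθ1 (by positivity) hpow
  refine ⟨k, hk, hmin, hkle, ?_⟩
  have hm : 0 ≤ min (‖gradf (x + θ ^ k • d)‖ / ε_H) ε_H := le_min (by positivity) hε.le
  have hstep : min (1 / (1 + √(1 + L_H / 2))) (6 * θ / (L_H + η)) *
      min (‖gradf (x + θ ^ k • d)‖ / ε_H) ε_H ≤ θ ^ k * ‖d‖ := by
    rcases k with _ | j
    · simp only [pow_zero, one_smul, one_mul] at hm ⊢
      exact (mul_le_mul_of_nonneg_right (min_le_left _ _) hm).trans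
        (one_div_one_add_sqrt_mul_min_le hε hLH.le (norm_nonneg d)
          (norm_image_add_regularizedNewton_le hhess hlip hregnewton hε.le))
    · have hfail := not_lt.mp (mt (hacc j) (hmin j j.lt_succ_self))
      calc _ ≤ 6 * θ / (L_H + η) * ε_H :=
            mul_le_mul (min_le_right _ _) (min_le_right _ _) hm (by positivity)
        _ = θ * (6 / (L_H + η) * ε_H) := by ring
        _ ≤ θ * (θ ^ j * ‖d‖) := by gcongr
        _ = θ ^ (j + 1) * ‖d‖ := by ring
  rw [pow_mul'] at hk
  nlinarith [min_pow_three_mul_min_le hstep]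

/-- Lemma 2.4: line search along the regularized Newton direction. -/
theorem regularized_newton_step_linesearch
    {n : ℕ} (f : EuclideanSpace ℝ (Fin n) → ℝ)
    (gradf : EuclideanSpace ℝ (Fin n) → EuclideanSpace ℝ (Fin n))
    (hessf : EuclideanSpace ℝ (Fin n) → EuclideanSpace ℝ (Fin n) →L[ℝ] EuclideanSpace ℝ (Fin n))
    (hf : ContDiff ℝ 2 f)
    (hgrad : ∀ x, HasGradientAt f (gradf x) x)
    (hhess : ∀ x, HasFDerivAt gradf (hessf x) x)
    (L_H : ℝ) (hLH : 0 < L_H)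
    (hlip : ∀ x y, ‖hessf x - hessf y‖ ≤ L_H * ‖x - y‖)
    (θ η ε_H U_g : ℝ) (hθ : θ ∈ Set.Ioo (0:ℝ) 1) (hη : 0 < η)
    (hεH : ε_H ∈ Set.Ioo (0:ℝ) 1) (hUg : 0 < U_g)
    (x d : EuclideanSpace ℝ (Fin n))
    (hpsd : ∀ v : EuclideanSpace ℝ (Fin n), -ε_H * ‖v‖^2 ≤ ⟪v, hessf x v⟫)
    (hgb : ‖gradf x‖ ≤ U_g) (hgne : gradf x ≠ 0)
    (hregnewton : hessf x d + (2*ε_H) • d = -gradf x) :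
    ∃ jk : ℕ,
      (f (x + θ^jk • d) < f x - η/6 * θ^(3*jk) * ‖d‖^3) ∧
      (∀ j : ℕ, j < jk → ¬ (f (x + θ^j • d) < f x - η/6 * θ^(3*j) * ‖d‖^3)) ∧
      (jk : ℝ) ≤ max (Real.logb θ (6/(L_H+η) * ε_H^2 / U_g)) 0 + 1 ∧
      f x - f (x + θ^jk • d) ≥
        η/6 * min ((1/(1+Real.sqrt (1+L_H/2)))^3) ((6*θ/(L_H+η))^3) *
          min (‖gradf (x + θ^jk • d)‖^3 / ε_H^3) (ε_H^3) :=
  regularized_newton_step_linesearch_general f gradf hessf hgrad hhess L_H hLH hlip θ η ε_H U_g hθ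
    hη hεH x d hpsd hgb hgne hregnewton
end

section
/- (Lemma 3.4) Suppose ε_H ∈ (0,1), ζ ∈ (0,1), ⟨v, ∇²f(x) v⟩ ≥ ε_H ‖v‖² for all v ∈ ℝⁿ, ‖∇f(x)‖ ≤ U_g with U_g > 0, and ∇f(x) ≠ 0. Let d satisfy ‖∇²f(x) d + ∇f(x)‖ ≤ (ζ/2)·min{‖∇f(x)‖, ε_H ‖d‖} together with ⟨∇f(x), ∇²f(x) d + ∇f(x)⟩ = 0 (orthogonality of the initial and final CG residuals). Then the smallest nonnegative integer j_k such that f(x + θ^{j_k} d) < f(x) - (η/6) θ^{3 j_k} ‖d‖³ exists and satisfies j_k ≤ [ (1/2) log_θ( (3/(L_H+η)) · (1-ζ) ε_H² / (U_g √(1+ζ²/4)) ) ]_+ + 1, and moreover f(x) - f(x + θ^{j_k} d) ≥ (η/6)·min{ (4/(ζ + √(ζ² + 8 L_H)))³, (3θ²(1-ζ)/(L_H+η))³ } · min{‖∇f(x + θ^{j_k} d)‖³ ε_H^{-3}, ε_H³}. -/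
/-!
Along `d`, the cubic Taylor bound for a Lipschitz Hessian, the coercivity of `∇²f(x)` and the
residual bound show that the step `α d` is accepted as soon as
`(L_H + η) α² ‖d‖ < 3 (1 - ζ) ε_H`. Orthogonality of the residuals gives
`‖∇²f(x) d‖² = ‖∇²f(x) d + ∇f(x)‖² + ‖∇f(x)‖²`, hence `ε_H ‖d‖ ≤ √(1 + ζ²/4) U_g`, which turns
this into the threshold on `θ^(2j)` and so bounds the first accepted index `j_k`.

For the decrease, `(η/6) (θ^j_k ‖d‖)³` has to be bounded below. If `j_k = 0`, the gradient at
`x + d` is at most `(ζ/2) ε_H ‖d‖ + (L_H/2) ‖d‖²`, and comparing with the positive root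
`c = 4 / (ζ + √(ζ² + 8 L_H))` of `(ζ/2) c + (L_H/2) c² = 1` bounds `‖d‖` below. If `j_k ≥ 1`, the
rejection of `θ^(j_k - 1)` violates the acceptance criterion above, which bounds
`θ^j_k ‖d‖ ≥ θ^(2 j_k) ‖d‖` below by `3 θ² (1 - ζ) ε_H / (L_H + η)`.
-/

open scoped RealInnerProductSpace

section Taylor

theorem hasDerivAt_add_smul {E : Type*} [NormedAddCommGroup E] [NormedSpace ℝ E] (x p : E)
    (t : ℝ) :
    HasDerivAt (fun t : ℝ => x + t • p) p t := by
  simpa using ((hasDerivAt_id t).smul_const p).const_add x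

variable {E F : Type*} [NormedAddCommGroup E] [NormedSpace ℝ E] [NormedAddCommGroup F]
  [NormedSpace ℝ F] {g : E → F} {g' : E → E →L[ℝ] F} {L : ℝ}

theorem norm_sub_sub_fderiv_le_of_lipschitz (hg : ∀ x, HasFDerivAt g (g' x) x)
    (hlip : ∀ x y, ‖g' x - g' y‖ ≤ L * ‖x - y‖) (x p : E) :
    ‖g (x + p) - g x - g' x p‖ ≤ L / 2 * ‖p‖ ^ 2 := by
  set φ : ℝ → F := fun t => g (x + t • p) - g x - t • g' x p
  have hφ : ∀ t : ℝ, HasDerivAt φ (g' (x + t • p) p - g' x p) t := fun t =>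
    (((hg _).comp_hasDerivAt t (hasDerivAt_add_smul x p t)).sub_const (g x)).sub
      (by simpa using (hasDerivAt_id t).smul_const (g' x p))
  have hbound : ∀ t : ℝ, HasDerivAt (fun t : ℝ => L / 2 * ‖p‖ ^ 2 * t ^ 2) (L * ‖p‖ ^ 2 * t) t :=
    fun t => ((hasDerivAt_pow 2 t).const_mul _).congr_deriv (by ring)
  have key := image_norm_le_of_norm_deriv_right_le_deriv_boundary
    (fun t _ => (hφ t).continuousAt.continuousWithinAt) (fun t _ => (hφ t).hasDerivWithinAt)
    (a := 0) (b := 1) (by simp [φ]) hbound (fun t ht => ?_)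
  · simpa [φ] using key (Set.right_mem_Icc.2 zero_le_one)
  calc ‖g' (x + t • p) p - g' x p‖ = ‖(g' (x + t • p) - g' x) p‖ := rfl
    _ ≤ ‖g' (x + t • p) - g' x‖ * ‖p‖ := (g' (x + t • p) - g' x).le_opNorm p
    _ ≤ L * ‖t • p‖ * ‖p‖ := by gcongr; simpa using hlip (x + t • p) x
    _ = L * ‖p‖ ^ 2 * t := by rw [norm_smul, Real.norm_of_nonneg ht.1]; ring

theorem norm_apply_add_le_of_lipschitz (hg : ∀ x, HasFDerivAt g (g' x) x)
    (hlip : ∀ x y, ‖g' x - g' y‖ ≤ L * ‖x - y‖) (x p : E) :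
    ‖g (x + p)‖ ≤ ‖g' x p + g x‖ + L / 2 * ‖p‖ ^ 2 := by
  have h := norm_sub_sub_fderiv_le_of_lipschitz hg hlip x p
  calc ‖g (x + p)‖ = ‖(g (x + p) - g x - g' x p) + (g' x p + g x)‖ := by abel_nf
    _ ≤ L / 2 * ‖p‖ ^ 2 + ‖g' x p + g x‖ := (norm_add_le _ _).trans (by gcongr)
    _ = _ := add_comm _ _

end Taylor

section SecondOrderTaylor

variable {E : Type*} [NormedAddCommGroup E] [InnerProductSpace ℝ E] [CompleteSpace E]
  {f : E → ℝ} {gradf : E → E} {hessf : E → E →L[ℝ] E} {L : ℝ}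

theorem abs_sub_taylor_two_le_of_lipschitz_hessian (hgrad : ∀ x, HasGradientAt f (gradf x) x)
    (hhess : ∀ x, HasFDerivAt gradf (hessf x) x)
    (hlip : ∀ x y, ‖hessf x - hessf y‖ ≤ L * ‖x - y‖) (x p : E) :
    |f (x + p) - f x - ⟪gradf x, p⟫ - 1 / 2 * ⟪hessf x p, p⟫| ≤ L / 6 * ‖p‖ ^ 3 := by
  set φ : ℝ → ℝ := fun t => f (x + t • p) - f x - t * ⟪gradf x, p⟫ - t ^ 2 / 2 * ⟪hessf x p, p⟫
  have hφ : ∀ t : ℝ, HasDerivAt φ ⟪gradf (x + t • p) - gradf x - t • hessf x p, p⟫ t := by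
    intro t
    have hf : HasDerivAt (fun t : ℝ => f (x + t • p)) ⟪gradf (x + t • p), p⟫ t := by
      refine ((hgrad _).hasFDerivAt.comp_hasDerivAt t (hasDerivAt_add_smul x p t)).congr_deriv ?_
      simp [InnerProductSpace.toDual_apply_apply]
    have hq : HasDerivAt (fun t : ℝ => t ^ 2 / 2 * ⟪hessf x p, p⟫) (t * ⟪hessf x p, p⟫) t :=
      (((hasDerivAt_pow 2 t).div_const 2).mul_const _).congr_deriv (by ring)
    refine (((hf.sub_const (f x)).sub ((hasDerivAt_id t).mul_const _)).sub hq).congr_deriv ?_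
    simp [inner_sub_left, real_inner_smul_left]
  have hbound : ∀ t : ℝ, HasDerivAt (fun t : ℝ => L / 6 * ‖p‖ ^ 3 * t ^ 3)
      (L / 2 * ‖p‖ ^ 3 * t ^ 2) t :=
    fun t => ((hasDerivAt_pow 3 t).const_mul _).congr_deriv (by ring)
  have key := image_norm_le_of_norm_deriv_right_le_deriv_boundary
    (fun t _ => (hφ t).continuousAt.continuousWithinAt) (fun t _ => (hφ t).hasDerivWithinAt)
    (a := 0) (b := 1) (by simp [φ]) hbound (fun t ht => ?_)
  · simpa [φ] using key (Set.right_mem_Icc.2 zero_le_one)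
  have hg := norm_sub_sub_fderiv_le_of_lipschitz hhess hlip x (t • p)
  rw [map_smul] at hg
  calc ‖⟪gradf (x + t • p) - gradf x - t • hessf x p, p⟫‖
      ≤ ‖gradf (x + t • p) - gradf x - t • hessf x p‖ * ‖p‖ := norm_inner_le_norm _ _
    _ ≤ L / 2 * ‖t • p‖ ^ 2 * ‖p‖ := by gcongr
    _ = L / 2 * ‖p‖ ^ 3 * t ^ 2 := by rw [norm_smul, Real.norm_of_nonneg ht.1]; ring

end SecondOrderTaylor

theorem min_pow_le_pow_min {M : Type*} [Monoid M] [LinearOrder M] (a b : M) (n : ℕ) :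
    min (a ^ n) (b ^ n) ≤ min a b ^ n := by
  rcases min_choice a b with h | h <;> rw [h] <;> simp

theorem half_mul_add_half_mul_sq_four_div_add_sqrt {ζ L : ℝ} (hζ : 0 < ζ) (hL : 0 ≤ L) :
    ζ / 2 * (4 / (ζ + √(ζ ^ 2 + 8 * L))) + L / 2 * (4 / (ζ + √(ζ ^ 2 + 8 * L))) ^ 2 = 1 := by
  have hs := Real.sq_sqrt (by positivity : 0 ≤ ζ ^ 2 + 8 * L)
  have : 0 < ζ + √(ζ ^ 2 + 8 * L) := by positivity
  field_simp
  nlinarith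

theorem mul_min_le_of_le_quadratic {ζ L ε c G t : ℝ} (hζ : 0 < ζ) (hL : 0 ≤ L) (hε : 0 < ε)
    (hc : 0 < c) (hroot : ζ / 2 * c + L / 2 * c ^ 2 = 1) (ht : 0 ≤ t)
    (hG : G ≤ ζ / 2 * (ε * t) + L / 2 * t ^ 2) : c * min (G / ε) ε ≤ t := by
  set m := min (G / ε) ε
  by_contra! hlt
  have hm : 0 < m := pos_of_mul_pos_right (ht.trans_lt hlt) hc.le
  have hεm : ε * m ≤ G := by
    calc ε * m ≤ ε * (G / ε) := by gcongr; exact min_le_left _ _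
      _ = G := by field_simp
  have hmε : m ≤ ε := min_le_right _ _
  have h1 : ζ / 2 * (ε * t) < ζ / 2 * (ε * (c * m)) := by gcongr
  have h2 : L / 2 * t ^ 2 ≤ L / 2 * (c * m) ^ 2 := by gcongr
  have h3 : L / 2 * (c * m) ^ 2 ≤ L / 2 * c ^ 2 * (ε * m) := by
    rw [mul_pow, ← mul_assoc, sq m]
    gcongr
  have h4 : ζ / 2 * (ε * (c * m)) + L / 2 * c ^ 2 * (ε * m) = ε * m := by
    linear_combination (ε * m) * hroot
  linarith

theorem mul_sq_mul_lt_of_sq_lt_threshold {L η ζ ε B a t : ℝ} (hLη : 0 < L + η) (hζ : ζ ≤ 1)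
    (hε : 0 ≤ ε) (ht : 0 < t) (hB : 0 < B) (hεt : ε * t ≤ B)
    (ha : a ^ 2 < 3 / (L + η) * ((1 - ζ) * ε ^ 2 / B)) :
    (L + η) * (a ^ 2 * t) < 3 * ((1 - ζ) * ε) :=
  calc (L + η) * (a ^ 2 * t) < (L + η) * (3 / (L + η) * ((1 - ζ) * ε ^ 2 / B) * t) := by gcongr
    _ = 3 * ((1 - ζ) * ε) * (ε * t / B) := by field_simp
    _ ≤ 3 * ((1 - ζ) * ε) * 1 := by
      have : 0 ≤ 1 - ζ := by linarith
      gcongr; exact (div_le_one hB).2 hεt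
    _ = 3 * ((1 - ζ) * ε) := mul_one _

section Backtracking

variable {θ A : ℝ}

theorem exists_pow_two_mul_lt_of_le_logb (hθ0 : 0 < θ) (hθ1 : θ < 1) (hA : 0 < A) :
    ∃ j : ℕ, (j : ℝ) ≤ max (1 / 2 * Real.logb θ A) 0 + 1 ∧ θ ^ (2 * j) < A := by
  set M := max (1 / 2 * Real.logb θ A) 0
  refine ⟨⌊M⌋₊ + 1, by push_cast; linarith [Nat.floor_le (le_max_right _ 0 : 0 ≤ M)], ?_⟩
  rw [← Real.rpow_natCast, ← Real.logb_lt_iff_lt_rpow_of_base_lt_one hθ0 hθ1 hA]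
  push_cast
  linarith [Nat.lt_floor_add_one M, le_max_left (1 / 2 * Real.logb θ A) 0]

theorem exists_least_le_logb_of_pow_lt {P : ℕ → Prop} (hθ0 : 0 < θ) (hθ1 : θ < 1) (hA : 0 < A)
    (hP : ∀ j, θ ^ (2 * j) < A → P j) :
    ∃ jk, P jk ∧ (∀ j < jk, ¬ P j) ∧ (jk : ℝ) ≤ max (1 / 2 * Real.logb θ A) 0 + 1 := by
  classical
  obtain ⟨j, hj, hjA⟩ := exists_pow_two_mul_lt_of_le_logb hθ0 hθ1 hA
  have hex : ∃ j, P j := ⟨j, hP j hjA⟩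
  refine ⟨Nat.find hex, Nat.find_spec hex, fun _ => Nat.find_min hex, le_trans ?_ hj⟩
  exact_mod_cast Nat.find_min' hex (hP j hjA)

end Backtracking

section InexactNewton

variable {E : Type*} [NormedAddCommGroup E] [InnerProductSpace ℝ E]

theorem ne_zero_of_norm_apply_add_le {F : Type*} [NormedAddCommGroup F] [NormedSpace ℝ F]
    {H : E →L[ℝ] F} {g : F} {d : E} {c : ℝ} (hg : g ≠ 0) (h : ‖H d + g‖ ≤ c * ‖d‖) : d ≠ 0 := by
  rintro rfl
  exact hg (norm_le_zero_iff.1 (by simpa using h))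

theorem mul_norm_le_norm_apply_of_coercive {H : E →L[ℝ] E} {d : E} {ε : ℝ}
    (h : ε * ‖d‖ ^ 2 ≤ ⟪d, H d⟫) : ε * ‖d‖ ≤ ‖H d‖ := by
  rcases eq_or_ne d 0 with rfl | hd
  · simp
  refine le_of_mul_le_mul_right ?_ (norm_pos_iff.2 hd)
  calc ε * ‖d‖ * ‖d‖ = ε * ‖d‖ ^ 2 := by ring
    _ ≤ ‖d‖ * ‖H d‖ := h.trans (real_inner_le_norm _ _)
    _ = ‖H d‖ * ‖d‖ := mul_comm _ _

theorem norm_apply_le_of_inner_residual_eq_zero {H : E →L[ℝ] E} {g d : E} {ζ : ℝ}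
    (horth : ⟪g, H d + g⟫ = 0) (hres : ‖H d + g‖ ≤ ζ / 2 * ‖g‖) :
    ‖H d‖ ≤ √(1 + ζ ^ 2 / 4) * ‖g‖ := by
  have hpyth : ‖H d‖ ^ 2 = ‖H d + g‖ ^ 2 + ‖g‖ ^ 2 := by
    rw [show H d = (H d + g) - g by abel, norm_sub_sq_real, real_inner_comm, horth]
    simp
  refine (pow_le_pow_iff_left₀ (norm_nonneg _) (by positivity) two_ne_zero).1 ?_
  rw [mul_pow, Real.sq_sqrt (by positivity), hpyth]
  nlinarith [pow_le_pow_left₀ (norm_nonneg _) hres 2]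

end InexactNewton

def CubicDecrease {E : Type*} [NormedAddCommGroup E] [NormedSpace ℝ E] (f : E → ℝ) (η : ℝ)
    (x d : E) (α : ℝ) : Prop :=
  f (x + α • d) < f x - η / 6 * α ^ 3 * ‖d‖ ^ 3

section LineSearch

variable {E : Type*} [NormedAddCommGroup E] [InnerProductSpace ℝ E]
  {f : E → ℝ} {gradf : E → E} {hessf : E → E →L[ℝ] E} {L η ε ζ : ℝ} {x d : E}

theorem cubicDecrease_of_sq_mul_norm_lt [CompleteSpace E]
    (hgrad : ∀ x, HasGradientAt f (gradf x) x)
    (hhess : ∀ x, HasFDerivAt gradf (hessf x) x)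
    (hlip : ∀ x y, ‖hessf x - hessf y‖ ≤ L * ‖x - y‖) (hε : 0 ≤ ε)
    (hpd : ε * ‖d‖ ^ 2 ≤ ⟪d, hessf x d⟫) (hres : ‖hessf x d + gradf x‖ ≤ ζ / 2 * (ε * ‖d‖))
    (hd : d ≠ 0) {α : ℝ} (hα0 : 0 < α) (hα1 : α ≤ 1)
    (hα : (L + η) * (α ^ 2 * ‖d‖) < 3 * ((1 - ζ) * ε)) :
    CubicDecrease f η x d α := by
  have htaylor : f (x + α • d) ≤ f x + α * ⟪gradf x, d⟫ + α ^ 2 / 2 * ⟪d, hessf x d⟫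
      + L / 6 * α ^ 3 * ‖d‖ ^ 3 := by
    have h := (abs_le.1 (abs_sub_taylor_two_le_of_lipschitz_hessian hgrad hhess hlip x
      (α • d))).2
    rw [norm_smul, Real.norm_of_nonneg hα0.le, map_smul, real_inner_smul_left,
      real_inner_smul_right, real_inner_smul_right, real_inner_comm d (hessf x d)] at h
    linarith
  have hgd : ⟪gradf x, d⟫ = ⟪hessf x d + gradf x, d⟫ - ⟪d, hessf x d⟫ := by
    rw [inner_add_left, real_inner_comm d (hessf x d)]; ring
  have hrd : ⟪hessf x d + gradf x, d⟫ ≤ ζ / 2 * (ε * ‖d‖) * ‖d‖ :=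
    (real_inner_le_norm _ _).trans (by gcongr)
  have hmodel : α * ⟪hessf x d + gradf x, d⟫ - α * (1 - α / 2) * ⟪d, hessf x d⟫
      ≤ -(α * (1 - ζ) * ε * ‖d‖ ^ 2 / 2) := by
    have h1 := mul_le_mul_of_nonneg_left hpd (mul_nonneg hα0.le (by linarith : 0 ≤ 1 - α / 2))
    have h2 : α * (ε * ‖d‖ ^ 2) / 2 ≤ α * (1 - α / 2) * (ε * ‖d‖ ^ 2) := by
      have : 0 ≤ α * (ε * ‖d‖ ^ 2) := by positivity
      nlinarith
    nlinarith [mul_le_mul_of_nonneg_left hrd hα0.le]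
  have hcubic : (L + η) / 6 * α ^ 3 * ‖d‖ ^ 3 < α * (1 - ζ) * ε * ‖d‖ ^ 2 / 2 := by
    have hdn : 0 < ‖d‖ := norm_pos_iff.2 hd
    have := mul_lt_mul_of_pos_right hα (by positivity : 0 < α * ‖d‖ ^ 2 / 6)
    linarith
  unfold CubicDecrease
  rw [hgd] at htaylor
  linarith

theorem le_sub_of_cubicDecrease {α μ : ℝ} (h : CubicDecrease f η x d α) (hη : 0 ≤ η)
    (hμ : μ ≤ α * ‖d‖) : η / 6 * μ ^ 3 ≤ f x - f (x + α • d) := by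
  have : η / 6 * μ ^ 3 ≤ η / 6 * (α * ‖d‖) ^ 3 :=
    mul_le_mul_of_nonneg_left ((Odd.pow_le_pow (by decide)).2 hμ) (by positivity)
  unfold CubicDecrease at h
  linarith [mul_pow α ‖d‖ 3]

theorem mul_min_le_norm_of_full_step (hhess : ∀ x, HasFDerivAt gradf (hessf x) x)
    (hlip : ∀ x y, ‖hessf x - hessf y‖ ≤ L * ‖x - y‖) (hL : 0 ≤ L) (hζ : 0 < ζ) (hε : 0 < ε)
    (hres : ‖hessf x d + gradf x‖ ≤ ζ / 2 * (ε * ‖d‖)) :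
    4 / (ζ + √(ζ ^ 2 + 8 * L)) * min (‖gradf (x + d)‖ / ε) ε ≤ ‖d‖ :=
  mul_min_le_of_le_quadratic hζ hL hε (by positivity)
    (half_mul_add_half_mul_sq_four_div_add_sqrt hζ hL) (norm_nonneg d) ((norm_apply_add_le_of_lipschitz hhess hlip x d).trans (by gcongr))

theorem min_mul_min_le_of_least [CompleteSpace E] (hgrad : ∀ x, HasGradientAt f (gradf x) x)
    (hhess : ∀ x, HasFDerivAt gradf (hessf x) x)
    (hlip : ∀ x y, ‖hessf x - hessf y‖ ≤ L * ‖x - y‖) (hL : 0 ≤ L) (hη : 0 < η)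
    (hε : 0 < ε) (hζ0 : 0 < ζ) (hζ1 : ζ ≤ 1) {θ : ℝ} (hθ0 : 0 < θ) (hθ1 : θ ≤ 1)
    (hpd : ε * ‖d‖ ^ 2 ≤ ⟪d, hessf x d⟫) (hres : ‖hessf x d + gradf x‖ ≤ ζ / 2 * (ε * ‖d‖))
    (hd : d ≠ 0) {jk : ℕ} (hmin : ∀ j < jk, ¬ CubicDecrease f η x d (θ ^ j)) :
    min (4 / (ζ + √(ζ ^ 2 + 8 * L))) (3 * θ ^ 2 * (1 - ζ) / (L + η)) *
      min (‖gradf (x + θ ^ jk • d)‖ / ε) ε ≤ θ ^ jk * ‖d‖ := by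
  have hm : 0 ≤ min (‖gradf (x + θ ^ jk • d)‖ / ε) ε := le_min (by positivity) hε.le
  have hLη : 0 < L + η := by linarith
  cases jk with
  | zero =>
    simp only [pow_zero, one_smul, one_mul] at hm ⊢
    exact (mul_le_mul_of_nonneg_right (min_le_left _ _) hm).trans
      (mul_min_le_norm_of_full_step hhess hlip hL hζ0 hε hres)
  | succ j =>
    have hrej : 3 * ((1 - ζ) * ε) ≤ (L + η) * ((θ ^ j) ^ 2 * ‖d‖) := not_lt.1 fun h =>
      hmin j j.lt_succ_self (cubicDecrease_of_sq_mul_norm_lt hgrad hhess hlip hε.le hpd hres hd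
        (pow_pos hθ0 j) (pow_le_one₀ hθ0.le hθ1) h)
    have hc : 0 ≤ 3 * θ ^ 2 * (1 - ζ) / (L + η) := div_nonneg (by nlinarith) hLη.le
    refine (mul_le_mul (min_le_right _ _) (min_le_right _ _) hm hc).trans ?_
    calc 3 * θ ^ 2 * (1 - ζ) / (L + η) * ε = θ ^ 2 * (3 * ((1 - ζ) * ε)) / (L + η) := by ring
      _ ≤ θ ^ 2 * ((L + η) * ((θ ^ j) ^ 2 * ‖d‖)) / (L + η) := by gcongr
      _ = (θ ^ (j + 1)) ^ 2 * ‖d‖ := by field_simp; ring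
      _ ≤ θ ^ (j + 1) * ‖d‖ := by
        gcongr; exact pow_le_of_le_one (by positivity) (pow_le_one₀ hθ0.le hθ1) two_ne_zero

end LineSearch

theorem inexact_newton_step_linesearch_general
    {n : ℕ} (f : EuclideanSpace ℝ (Fin n) → ℝ)
    (gradf : EuclideanSpace ℝ (Fin n) → EuclideanSpace ℝ (Fin n))
    (hessf : EuclideanSpace ℝ (Fin n) → EuclideanSpace ℝ (Fin n) →L[ℝ] EuclideanSpace ℝ (Fin n))
    (hgrad : ∀ x, HasGradientAt f (gradf x) x)
    (hhess : ∀ x, HasFDerivAt gradf (hessf x) x)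
    (L_H : ℝ) (hLH : 0 < L_H)
    (hlip : ∀ x y, ‖hessf x - hessf y‖ ≤ L_H * ‖x - y‖)
    (θ η ε_H ζ U_g : ℝ) (hθ : θ ∈ Set.Ioo (0:ℝ) 1) (hη : 0 < η)
    (hεH : ε_H ∈ Set.Ioo (0:ℝ) 1) (hζ : ζ ∈ Set.Ioo (0:ℝ) 1) (hUg : 0 < U_g)
    (x d : EuclideanSpace ℝ (Fin n))
    (hpd : ∀ v : EuclideanSpace ℝ (Fin n), ε_H * ‖v‖^2 ≤ ⟪v, hessf x v⟫)
    (hgb : ‖gradf x‖ ≤ U_g) (hgne : gradf x ≠ 0)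
    (hres : ‖hessf x d + gradf x‖ ≤ ζ/2 * min (‖gradf x‖) (ε_H * ‖d‖))
    (horth : ⟪gradf x, hessf x d + gradf x⟫ = 0) :
    ∃ jk : ℕ,
      (f (x + θ^jk • d) < f x - η/6 * θ^(3*jk) * ‖d‖^3) ∧
      (∀ j : ℕ, j < jk → ¬ (f (x + θ^j • d) < f x - η/6 * θ^(3*j) * ‖d‖^3)) ∧
      (jk : ℝ) ≤ max ((1/2) * Real.logb θ
        (3/(L_H+η) * ((1-ζ) * ε_H^2 / (U_g * Real.sqrt (1+ζ^2/4))))) 0 + 1 ∧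
      f x - f (x + θ^jk • d) ≥
        η/6 * min ((4/(ζ + Real.sqrt (ζ^2 + 8*L_H)))^3) ((3*θ^2*(1-ζ)/(L_H+η))^3) *
          min (‖gradf (x + θ^jk • d)‖^3 / ε_H^3) (ε_H^3) := by
  obtain ⟨hθ0, hθ1⟩ := hθ
  obtain ⟨hε, -⟩ := hεH
  obtain ⟨hζ0, hζ1⟩ := hζ
  have hres_d : ‖hessf x d + gradf x‖ ≤ ζ / 2 * (ε_H * ‖d‖) :=
    hres.trans (by gcongr; exact min_le_right _ _)
  have hres_g : ‖hessf x d + gradf x‖ ≤ ζ / 2 * ‖gradf x‖ :=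
    hres.trans (by gcongr; exact min_le_left _ _)
  have hd : d ≠ 0 :=
    ne_zero_of_norm_apply_add_le (c := ζ / 2 * ε_H) hgne (hres_d.trans_eq (by ring))
  have hdU : ε_H * ‖d‖ ≤ U_g * √(1 + ζ ^ 2 / 4) :=
    (mul_norm_le_norm_apply_of_coercive (hpd d)).trans <|
      (norm_apply_le_of_inner_residual_eq_zero horth hres_g).trans (by rw [mul_comm]; gcongr)
  have hacc : ∀ j : ℕ,
      θ ^ (2 * j) < 3 / (L_H + η) * ((1 - ζ) * ε_H ^ 2 / (U_g * √(1 + ζ ^ 2 / 4))) →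
      CubicDecrease f η x d (θ ^ j) := fun j hj =>
    cubicDecrease_of_sq_mul_norm_lt hgrad hhess hlip hε.le (hpd d) hres_d hd (pow_pos hθ0 j)
      (pow_le_one₀ hθ0.le hθ1.le) (mul_sq_mul_lt_of_sq_lt_threshold (by positivity) hζ1.le hε.le
        (norm_pos_iff.2 hd) (by positivity) hdU (by rwa [← pow_mul']))
  obtain ⟨jk, hjk, hmin, hbound⟩ :=
    exists_least_le_logb_of_pow_lt hθ0 hθ1 (by have := sub_pos.2 hζ1; positivity) hacc
  have hstep := min_mul_min_le_of_least hgrad hhess hlip hLH.le hη hε hζ0 hζ1.le hθ0 hθ1.le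
    (hpd d) hres_d hd hmin
  refine ⟨jk, by rwa [pow_mul'], fun j hj => by rw [pow_mul']; exact hmin j hj, hbound, ?_⟩
  have hc : 0 ≤ min (4 / (ζ + √(ζ ^ 2 + 8 * L_H))) (3 * θ ^ 2 * (1 - ζ) / (L_H + η)) :=
    le_min (by positivity) (div_nonneg (by nlinarith) (by positivity))
  refine le_trans ?_ (le_sub_of_cubicDecrease hjk hη.le hstep)
  rw [mul_assoc, mul_pow, ← div_pow]
  gcongr η / 6 * ?_
  exact mul_le_mul (min_pow_le_pow_min _ _ 3) (min_pow_le_pow_min _ _ 3)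
    (le_min (by positivity) (by positivity)) (pow_nonneg hc 3)

/-- Lemma 3.4: line search along the inexact Newton direction. -/
theorem inexact_newton_step_linesearch
    {n : ℕ} (f : EuclideanSpace ℝ (Fin n) → ℝ)
    (gradf : EuclideanSpace ℝ (Fin n) → EuclideanSpace ℝ (Fin n))
    (hessf : EuclideanSpace ℝ (Fin n) → EuclideanSpace ℝ (Fin n) →L[ℝ] EuclideanSpace ℝ (Fin n))
    (hf : ContDiff ℝ 2 f)
    (hgrad : ∀ x, HasGradientAt f (gradf x) x)
    (hhess : ∀ x, HasFDerivAt gradf (hessf x) x)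
    (L_H : ℝ) (hLH : 0 < L_H)
    (hlip : ∀ x y, ‖hessf x - hessf y‖ ≤ L_H * ‖x - y‖)
    (θ η ε_H ζ U_g : ℝ) (hθ : θ ∈ Set.Ioo (0:ℝ) 1) (hη : 0 < η)
    (hεH : ε_H ∈ Set.Ioo (0:ℝ) 1) (hζ : ζ ∈ Set.Ioo (0:ℝ) 1) (hUg : 0 < U_g)
    (x d : EuclideanSpace ℝ (Fin n))
    (hpd : ∀ v : EuclideanSpace ℝ (Fin n), ε_H * ‖v‖^2 ≤ ⟪v, hessf x v⟫)
    (hgb : ‖gradf x‖ ≤ U_g) (hgne : gradf x ≠ 0)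
    (hres : ‖hessf x d + gradf x‖ ≤ ζ/2 * min (‖gradf x‖) (ε_H * ‖d‖))
    (horth : ⟪gradf x, hessf x d + gradf x⟫ = 0) :
    ∃ jk : ℕ,
      (f (x + θ^jk • d) < f x - η/6 * θ^(3*jk) * ‖d‖^3) ∧
      (∀ j : ℕ, j < jk → ¬ (f (x + θ^j • d) < f x - η/6 * θ^(3*j) * ‖d‖^3)) ∧
      (jk : ℝ) ≤ max ((1/2) * Real.logb θ
        (3/(L_H+η) * ((1-ζ) * ε_H^2 / (U_g * Real.sqrt (1+ζ^2/4))))) 0 + 1 ∧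
      f x - f (x + θ^jk • d) ≥
        η/6 * min ((4/(ζ + Real.sqrt (ζ^2 + 8*L_H)))^3) ((3*θ^2*(1-ζ)/(L_H+η))^3) *
          min (‖gradf (x + θ^jk • d)‖^3 / ε_H^3) (ε_H^3) :=
  inexact_newton_step_linesearch_general f gradf hessf hgrad hhess L_H hLH hlip θ η ε_H ζ U_g hθ hη
    hεH hζ hUg x d hpd hgb hgne hres horth
end
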